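/- arXiv:math/0604035 — 3 statements merged into one kernel-verified Lean document; each statement's English description precedes it below -/
import Mathlib

section
/- Let (u_n) and (v_n) be two sequences of positive real numbers such that u_n^{1/n} → u and v_n^{1/n} → v. Define w_n = Σ_{k=0}^n u_k v_{n−k}. Then w_n^{1/n} converges to max{u, v}. -/
open MeasureTheory Filter Topology ENNReal

noncomputable section

/-- The ℓ-adic interval of generation `n` with index `k`. -/
def adicI (ℓ n k : ℕ) : Set ℝ := Set.Ico ((k : ℝ) / ℓ ^ n) ((k + 1 : ℝ) / ℓ ^ n)

/-- The mass of a set for a measure, as a real number. -/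
def mss (μ : Measure ℝ) (s : Set ℝ) : ℝ := (μ s).toReal

/-- The `2ℓ` similitudes of ratio `±1/ℓ`. -/
def simMapT (ℓ i : ℕ) (x : ℝ) : ℝ :=
  if i < ℓ then x / ℓ + i / ℓ else -x / ℓ + ((i - ℓ + 1 : ℕ) : ℝ) / ℓ

/-- The reflection `T(x) = 1 - x`. -/
def refl1 (x : ℝ) : ℝ := 1 - x

/-- The measure `ν = (μ + μ ∘ T)/2`. -/
def nuT (μ : Measure ℝ) : Measure ℝ := (2 : ℝ≥0∞)⁻¹ • (μ + μ.map refl1)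

/-- Partition-function sequence `u_n = ∑_{I ∈ F_n, m(I) ≠ 0} m(I)^q`. -/
def uSeq (ℓ : ℕ) (μ : Measure ℝ) (q : ℝ) (n : ℕ) : ℝ :=
  ∑ k ∈ (Finset.range (ℓ ^ n)).filter (fun k => mss μ (adicI ℓ n k) ≠ 0),
    mss μ (adicI ℓ n k) ^ q

/-- The `L^q`-spectrum `τ(q)` of a measure, defined with a `limsup`. -/
def Lsp (ℓ : ℕ) (μ : Measure ℝ) (q : ℝ) : ℝ :=
  limsup (fun n : ℕ => Real.log (uSeq ℓ μ q n) / (n * Real.log ℓ)) atTop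

/-- `‖M‖₁`: the sum of the first-row entries. -/
def normOne (M : Matrix (Fin 2) (Fin 2) ℝ) : ℝ := M 0 0 + M 0 1

/-- `‖M‖`: half of the sum of all entries. -/
def normH2 (M : Matrix (Fin 2) (Fin 2) ℝ) : ℝ := (M 0 0 + M 0 1 + M 1 0 + M 1 1) / 2

/-- The matrix `M_ε`. -/
def MmatT (ℓ : ℕ) (p : ℕ → ℝ) (ε : ℕ) : Matrix (Fin 2) (Fin 2) ℝ :=
  !![p ε, p (ε + ℓ); p (2 * ℓ - 1 - ε), p (ℓ - 1 - ε)]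

/-- The ℓ-adic interval `I_{ε₁⋯ε_n}` associated with a word. -/
def wordI (ℓ n : ℕ) (ε : Fin n → ℕ) : Set ℝ :=
  Set.Ico (∑ i : Fin n, (ε i : ℝ) / ℓ ^ ((i : ℕ) + 1))
    (∑ i : Fin n, (ε i : ℝ) / ℓ ^ ((i : ℕ) + 1) + 1 / ℓ ^ n)

/-- The ℓ-adic shift `σ(x) = ℓx (mod 1)`. -/
def shiftM (ℓ : ℕ) (x : ℝ) : ℝ := Int.fract (ℓ * x)

/-- `I_n(x)`: the ℓ-adic interval of generation `n` containing `x`. -/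
def Iofx (ℓ n : ℕ) (x : ℝ) : Set ℝ := adicI ℓ n (⌊(ℓ : ℝ) ^ n * x⌋).toNat

/-- The level set `E_α(m)` of points of `[0,1)` with local dimension `α`. -/
def ESet (ℓ : ℕ) (μ : Measure ℝ) (α : ℝ) : Set ℝ :=
  {x ∈ Set.Ico (0 : ℝ) 1 |
    Tendsto (fun n : ℕ => -Real.log (mss μ (Iofx ℓ n x)) / (n * Real.log ℓ)) atTop (𝓝 α)}


lemma tend_one' (K : ℝ) (hK : 0 < K) : Tendsto (fun n : ℕ => K ^ ((1:ℝ)/n)) atTop (𝓝 1) := by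
  have h : Tendsto (fun n : ℕ => Real.log K * (1/(n:ℝ))) atTop (𝓝 (Real.log K * 0)) :=
    tendsto_const_nhds.mul tendsto_one_div_atTop_nhds_zero_nat
  rw [mul_zero] at h
  have h2 := (Real.continuous_exp.tendsto 0).comp h
  rw [Real.exp_zero] at h2
  exact h2.congr fun n => by
    simp only [Function.comp_apply]
    rw [Real.rpow_def_of_pos hK]

lemma tend_nat' : Tendsto (fun n : ℕ => ((n:ℝ)+1) ^ ((1:ℝ)/n)) atTop (𝓝 1) := by
  have h0 : Tendsto (fun x : ℝ => Real.log x / x) atTop (𝓝 0) :=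
    Real.isLittleO_log_id_atTop.tendsto_div_nhds_zero
  have h1 : Tendsto (fun n : ℕ => (n:ℝ)+1) atTop atTop :=
    tendsto_atTop_add_const_right _ 1 tendsto_natCast_atTop_atTop
  have h2 : Tendsto (fun n : ℕ => Real.log ((n:ℝ)+1) / ((n:ℝ)+1)) atTop (𝓝 0) := h0.comp h1
  have h3 : Tendsto (fun n : ℕ => ((n:ℝ)+1)/(n:ℝ)) atTop (𝓝 1) := by
    have h : Tendsto (fun n : ℕ => (1:ℝ) + 1/(n:ℝ)) atTop (𝓝 (1+0)) :=
      tendsto_const_nhds.add tendsto_one_div_atTop_nhds_zero_nat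
    rw [add_zero] at h
    refine Tendsto.congr' ?_ h
    filter_upwards [eventually_ge_atTop 1] with n hn
    have : (n:ℝ) ≠ 0 := by exact_mod_cast Nat.one_le_iff_ne_zero.1 hn
    field_simp
  have h4 : Tendsto (fun n : ℕ => Real.log ((n:ℝ)+1) / (n:ℝ)) atTop (𝓝 0) := by
    have h := h2.mul h3
    rw [zero_mul] at h
    refine Tendsto.congr' ?_ h
    filter_upwards [eventually_ge_atTop 1] with n hn
    have hn0 : (n:ℝ) ≠ 0 := by exact_mod_cast Nat.one_le_iff_ne_zero.1 hn
    have hn1 : (n:ℝ)+1 ≠ 0 := by positivity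
    field_simp
  have h5 := (Real.continuous_exp.tendsto 0).comp h4
  rw [Real.exp_zero] at h5
  exact h5.congr fun n => by
    simp only [Function.comp_apply]
    rw [Real.rpow_def_of_pos (by positivity), mul_one_div]

lemma geom_bound' (u : ℕ → ℝ) (a m : ℝ) (hu : ∀ n, 0 < u n)
    (ha : Tendsto (fun n : ℕ => u n ^ ((1:ℝ)/n)) atTop (𝓝 a)) (ham : a < m) (hm : 0 < m) :
    ∃ C : ℝ, 1 ≤ C ∧ ∀ k, u k ≤ C * m ^ k := by
  obtain ⟨N, hN⟩ := Filter.eventually_atTop.1 (ha.eventually (eventually_le_nhds ham))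
  refine ⟨1 + ∑ j ∈ Finset.range (N+1), u j / m ^ j,
    le_add_of_nonneg_right (Finset.sum_nonneg fun j _ => div_nonneg (hu j).le (pow_pos hm j).le), fun k => ?_⟩
  rcases le_or_gt k N with hk | hk
  · have h1 : u k / m ^ k ≤ ∑ j ∈ Finset.range (N+1), u j / m ^ j :=
      Finset.single_le_sum (f := fun j => u j / m ^ j)
        (fun j _ => div_nonneg (hu j).le (pow_pos hm j).le) (Finset.mem_range.2 (Nat.lt_succ_of_le hk))
    rw [div_le_iff₀ (pow_pos hm k)] at h1
    calc u k ≤ (∑ j ∈ Finset.range (N+1), u j / m ^ j) * m ^ k := h1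
      _ ≤ (1 + ∑ j ∈ Finset.range (N+1), u j / m ^ j) * m ^ k :=
        mul_le_mul_of_nonneg_right (by linarith) (pow_pos hm k).le
  · have hkpos : 0 < k := Nat.lt_of_le_of_lt (Nat.zero_le N) hk
    have hk0 : (k:ℝ) ≠ 0 := Nat.cast_ne_zero.2 hkpos.ne'
    have h1 : u k ^ ((1:ℝ)/k) ≤ m := hN k hk.le
    have h2 : u k ≤ m ^ k := by
      rw [← Real.rpow_natCast m k]
      calc u k = (u k ^ ((1:ℝ)/k)) ^ (k:ℝ) := by
            rw [← Real.rpow_mul (hu k).le, one_div, inv_mul_cancel₀ hk0, Real.rpow_one]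
        _ ≤ m ^ (k:ℝ) := Real.rpow_le_rpow (Real.rpow_nonneg (hu k).le _) h1 (Nat.cast_nonneg k)
    exact h2.trans (le_mul_of_one_le_left (pow_pos hm k).le
      (le_add_of_nonneg_right (Finset.sum_nonneg fun j _ => div_nonneg (hu j).le (pow_pos hm j).le)))


/-- If `u_n^{1/n} → u` and `v_n^{1/n} → v` for positive sequences, then
`(∑_{k=0}^n u_k v_{n-k})^{1/n} → max u v`. -/
theorem stmt0 (u v : ℕ → ℝ) (hu : ∀ n, 0 < u n) (hv : ∀ n, 0 < v n) (a b : ℝ)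
    (ha : Tendsto (fun n : ℕ => u n ^ ((1 : ℝ) / n)) atTop (𝓝 a))
    (hb : Tendsto (fun n : ℕ => v n ^ ((1 : ℝ) / n)) atTop (𝓝 b)) :
    Tendsto (fun n : ℕ => (∑ k ∈ Finset.range (n + 1), u k * v (n - k)) ^ ((1 : ℝ) / n))
      atTop (𝓝 (max a b)) := by
  have ha0 : 0 ≤ a := ge_of_tendsto' ha fun n => Real.rpow_nonneg (hu n).le _
  set w : ℕ → ℝ := fun n => ∑ k ∈ Finset.range (n+1), u k * v (n-k) with hwdef
  have hwpos : ∀ n, 0 < w n := fun n =>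
    Finset.sum_pos (fun k _ => mul_pos (hu k) (hv _)) ⟨0, Finset.mem_range.2 (Nat.succ_pos n)⟩
  rw [tendsto_order]
  constructor
  · intro c hc
    rcases lt_max_iff.1 hc with h | h
    · have h1 : Tendsto (fun n : ℕ => (u n * v 0) ^ ((1:ℝ)/n)) atTop (𝓝 a) := by
        have h2 := ha.mul (tend_one' (v 0) (hv 0))
        rw [mul_one] at h2
        exact h2.congr fun n => (Real.mul_rpow (hu n).le (hv 0).le).symm
      filter_upwards [h1.eventually (eventually_gt_nhds h)] with n hn
      refine hn.trans_le ?_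
      refine Real.rpow_le_rpow (mul_pos (hu n) (hv 0)).le ?_ (by positivity)
      have h3 : u n * v (n - n) ≤ w n :=
        Finset.single_le_sum (f := fun k => u k * v (n-k))
          (fun k _ => (mul_pos (hu k) (hv _)).le) (Finset.mem_range.2 (Nat.lt_succ_self n))
      simpa using h3
    · have h1 : Tendsto (fun n : ℕ => (u 0 * v n) ^ ((1:ℝ)/n)) atTop (𝓝 b) := by
        have h2 := (tend_one' (u 0) (hu 0)).mul hb
        rw [one_mul] at h2
        exact h2.congr fun n => (Real.mul_rpow (hu 0).le (hv n).le).symm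
      filter_upwards [h1.eventually (eventually_gt_nhds h)] with n hn
      refine hn.trans_le ?_
      refine Real.rpow_le_rpow (mul_pos (hu 0) (hv n)).le ?_ (by positivity)
      have h3 : u 0 * v (n - 0) ≤ w n :=
        Finset.single_le_sum (f := fun k => u k * v (n-k))
          (fun k _ => (mul_pos (hu k) (hv _)).le) (Finset.mem_range.2 (Nat.succ_pos n))
      simpa using h3
  · intro c hc
    set m : ℝ := (max a b + c) / 2 with hmdef
    have hmax0 : (0:ℝ) ≤ max a b := le_max_of_le_left ha0
    have hm1 : max a b < m := by rw [hmdef]; linarith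
    have hm2 : m < c := by rw [hmdef]; linarith
    have hmpos : 0 < m := hmax0.trans_lt hm1
    obtain ⟨Cu, hCu1, hCu⟩ := geom_bound' u a m hu ha ((le_max_left a b).trans_lt hm1) hmpos
    obtain ⟨Cv, hCv1, hCv⟩ := geom_bound' v b m hv hb ((le_max_right a b).trans_lt hm1) hmpos
    have hKpos : 0 < Cu * Cv := mul_pos (lt_of_lt_of_le one_pos hCu1) (lt_of_lt_of_le one_pos hCv1)
    have hsum : ∀ n : ℕ, w n ≤ ((n:ℝ)+1) * (Cu * Cv) * m ^ n := by
      intro n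
      calc w n ≤ ∑ k ∈ Finset.range (n+1), (Cu * m ^ k) * (Cv * m ^ (n-k)) :=
          Finset.sum_le_sum fun k _ => mul_le_mul (hCu k) (hCv _) (hv _).le
            ((hu k).le.trans (hCu k))
        _ = ∑ _k ∈ Finset.range (n+1), Cu * Cv * m ^ n := by
          refine Finset.sum_congr rfl fun k hk => ?_
          rw [mul_mul_mul_comm, ← pow_add,
            Nat.add_sub_cancel' (Nat.lt_succ_iff.1 (Finset.mem_range.1 hk))]
        _ = ((n:ℝ)+1) * (Cu * Cv) * m ^ n := by
          rw [Finset.sum_const, Finset.card_range, nsmul_eq_mul]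
          push_cast
          ring
    have hg : Tendsto (fun n : ℕ => ((n:ℝ)+1) ^ ((1:ℝ)/n) * (Cu*Cv) ^ ((1:ℝ)/n) * m) atTop
        (𝓝 (1 * 1 * m)) := (tend_nat'.mul (tend_one' _ hKpos)).mul_const m
    rw [one_mul, one_mul] at hg
    filter_upwards [hg.eventually (eventually_lt_nhds hm2), eventually_ge_atTop 1] with n hgn hn1
    refine lt_of_le_of_lt ?_ hgn
    have hn0 : (n:ℝ) ≠ 0 := Nat.cast_ne_zero.2 (Nat.one_le_iff_ne_zero.1 hn1)
    have h1 : w n ^ ((1:ℝ)/n) ≤ (((n:ℝ)+1) * (Cu*Cv) * m ^ n) ^ ((1:ℝ)/n) :=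
      Real.rpow_le_rpow (hwpos n).le (hsum n) (by positivity)
    refine h1.trans_eq ?_
    rw [Real.mul_rpow (by positivity) (by positivity),
      Real.mul_rpow (by positivity) (by positivity)]
    congr 1
    rw [← Real.rpow_natCast m n, ← Real.rpow_mul hmpos.le, mul_one_div, div_self hn0,
      Real.rpow_one]

end
end

section
/- Let ℓ ≥ 2 be an integer and (p_i)_{i=0}^{2ℓ−1} probability weights with p_i + p_{i+ℓ} > 0 for all 0 ≤ i ≤ ℓ−1. For each ε ∈ {0,…,ℓ−1} let M_ε be the 2×2 matrix [[p_ε, p_{ε+ℓ}],[p_{2ℓ−1−ε}, p_{ℓ−1−ε}]]. Then the self-similar measure μ satisfying μ = Σ_{i=0}^{2ℓ−1} p_i μ∘S_i^{−1} (where S_i(x)=x/ℓ+i/ℓ for i<ℓ and S_{i+ℓ}(x)=−x/ℓ+(i+1)/ℓ) assigns to each ℓ-adic interval I = I_{ε₁⋯ε_n} the mass μ(I) = ‖M_{ε₁}⋯M_{ε_n}‖₁, where ‖M‖₁ = (1 0) M (1 1)ᵀ. -/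
/-!
Write `T x = 1 - x`. The similitudes satisfy `S_{ε+ℓ} = S_ε ∘ T` and `T ∘ S_ε = S_{ℓ-1-ε} ∘ T`.
A contraction argument puts the support of `μ` in `[0,1]`, and the masses of the atoms `0` and `1`
solve a strictly substochastic linear system (this is where `p_i + p_{i+ℓ} > 0` enters), so
`μ` is carried by `(0,1)`. Then a subset of the `ε`-th cell `[ε/ℓ, (ε+1)/ℓ]` is charged only by
`S_ε` and `S_{ε+ℓ}`, which turns the self-similarity into
`(μ (S_ε J), μ (T (S_ε J))) = M_ε (μ J, μ (T J))` for `J ⊆ [0,1]`. Iterating from `J = [0,1)`,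
where both masses are `1`, gives the product formula.
-/

open MeasureTheory Filter Topology ENNReal

noncomputable section

open Set
open scoped Matrix

lemma refl1_involutive : Function.Involutive refl1 := fun x => by simp [refl1]

lemma mapsTo_refl1_Icc (t : ℝ) : MapsTo refl1 (Icc (-t) (1 + t)) (Icc (-t) (1 + t)) :=
  fun x hx => by constructor <;> simp only [refl1] <;> linarith [hx.1, hx.2]

lemma mapsTo_refl1_Ioo : MapsTo refl1 (Ioo 0 1) (Ioo 0 1) :=
  fun x hx => by constructor <;> simp only [refl1] <;> linarith [hx.1, hx.2]

lemma preimage_refl1_singleton (y : ℝ) : refl1 ⁻¹' {y} = {1 - y} := by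
  ext x
  simp only [mem_preimage, mem_singleton_iff, refl1]
  constructor <;> intro h <;> linarith

lemma exists_lt_eq_or_eq_add {ℓ c : ℕ} (hc : c < 2 * ℓ) : ∃ j < ℓ, c = j ∨ c = j + ℓ :=
  if h : c < ℓ then ⟨c, h, .inl rfl⟩ else ⟨c - ℓ, by omega, .inr (by omega)⟩

section simMapT

variable {ℓ i : ℕ}

lemma simMapT_of_lt (hi : i < ℓ) (x : ℝ) : simMapT ℓ i x = (x + i) / ℓ := by
  simp [simMapT, hi, add_div]

lemma simMapT_add_self (hi : i < ℓ) : simMapT ℓ (i + ℓ) = simMapT ℓ i ∘ refl1 := by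
  ext x
  simp only [simMapT, hi, if_true, show ¬(i + ℓ < ℓ) by omega, if_false, Function.comp, refl1,
    show i + ℓ - ℓ + 1 = i + 1 by omega]
  push_cast
  ring

lemma refl1_comp_simMapT (hi : i < ℓ) :
    refl1 ∘ simMapT ℓ i = simMapT ℓ (ℓ - 1 - i) ∘ refl1 := by
  have hℓ : (ℓ : ℝ) ≠ 0 := by norm_cast; omega
  ext x
  simp only [Function.comp, simMapT_of_lt hi, simMapT_of_lt (show ℓ - 1 - i < ℓ by omega), refl1,
    Nat.cast_sub (show i ≤ ℓ - 1 by omega), Nat.cast_sub (show 1 ≤ ℓ by omega)]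
  field_simp
  ring

lemma continuous_simMapT : Continuous (simMapT ℓ i) := by
  unfold simMapT
  split_ifs <;> fun_prop

lemma simMapT_injective (hℓ : 0 < ℓ) : Function.Injective (simMapT ℓ i) := by
  have hℓ : (ℓ : ℝ) ≠ 0 := by positivity
  intro x y h
  simp only [simMapT] at h
  split_ifs at h <;> field_simp at h <;> linarith

lemma measurableEmbedding_simMapT (hℓ : 0 < ℓ) : MeasurableEmbedding (simMapT ℓ i) :=
  continuous_simMapT.measurableEmbedding (simMapT_injective hℓ)

lemma mapsTo_simMapT_Icc (hi : i < ℓ) (t : ℝ) :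
    MapsTo (simMapT ℓ i) (Icc (-(ℓ * t)) (1 + ℓ * t)) (Icc (-t) (1 + t)) := by
  have hℓ : (0 : ℝ) < ℓ := Nat.cast_pos.2 (by omega)
  have hiℓ : (i : ℝ) + 1 ≤ ℓ := by exact_mod_cast hi
  intro x ⟨hx₀, hx₁⟩
  rw [simMapT_of_lt hi]
  constructor
  · rw [le_div_iff₀ hℓ]; nlinarith
  · rw [div_le_iff₀ hℓ]; nlinarith

end simMapT

lemma preimage_simMapT_singleton {ℓ j : ℕ} (hj : j < ℓ) (y : ℝ) :
    simMapT ℓ j ⁻¹' {y} = {ℓ * y - j} := by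
  have hℓ : (ℓ : ℝ) ≠ 0 := by norm_cast; omega
  ext x
  simp only [mem_preimage, mem_singleton_iff, simMapT_of_lt hj, div_eq_iff hℓ]
  constructor <;> intro h <;> linarith

lemma preimage_refl1_image_simMapT {ℓ e : ℕ} (he : e < ℓ) (J : Set ℝ) :
    refl1 ⁻¹' (simMapT ℓ e '' J) = simMapT ℓ (ℓ - 1 - e) '' (refl1 ⁻¹' J) := by
  rw [← refl1_involutive.image_eq_preimage_symm, ← image_comp, refl1_comp_simMapT he, image_comp]

lemma wordI_zero (ℓ : ℕ) (ε : Fin 0 → ℕ) : wordI ℓ 0 ε = Ico 0 1 := by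
  simp [wordI]

lemma wordI_succ {ℓ n : ℕ} (ε : Fin (n + 1) → ℕ) (h : ε 0 < ℓ) :
    wordI ℓ (n + 1) ε = simMapT ℓ (ε 0) '' wordI ℓ n (Fin.tail ε) := by
  have hℓ : (0 : ℝ) < ℓ := by exact_mod_cast (show 0 < ℓ by omega)
  have hS : simMapT ℓ (ε 0) = ((ℓ : ℝ)⁻¹ * · + ε 0 / ℓ) :=
    funext fun x => by rw [simMapT_of_lt h]; ring
  have htail : ∑ i : Fin n, (ε i.succ : ℝ) / ℓ ^ ((i.succ : ℕ) + 1)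
      = (ℓ : ℝ)⁻¹ * ∑ i : Fin n, (Fin.tail ε i : ℝ) / ℓ ^ ((i : ℕ) + 1) := by
    rw [Finset.mul_sum]
    refine Finset.sum_congr rfl fun i _ => ?_
    rw [Fin.val_succ, pow_succ _ ((i : ℕ) + 1)]
    field_simp
    rfl
  rw [hS, wordI, wordI, image_affine_Ico (inv_pos.2 hℓ), Fin.sum_univ_succ, htail]
  congr 1 <;> simp only [Fin.val_zero, pow_succ] <;> ring

lemma wordI_subset_Icc {ℓ : ℕ} : ∀ {n : ℕ} (ε : Fin n → ℕ), (∀ i, ε i < ℓ) →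
    wordI ℓ n ε ⊆ Icc 0 1
  | 0, ε, _ => by rw [wordI_zero]; exact Ico_subset_Icc_self
  | n + 1, ε, hε => by
    have hmaps : MapsTo (simMapT ℓ (ε 0)) (Icc 0 1) (Icc 0 1) := by
      simpa using mapsTo_simMapT_Icc (hε 0) 0
    rw [wordI_succ ε (hε 0)]
    exact (hmaps.mono_left (wordI_subset_Icc (Fin.tail ε) fun i => hε _)).image_subset

lemma eq_zero_of_fixedPoint {q₀ q₁ q₂ q₃ a b : ℝ} (h₀ : 0 ≤ q₀) (h₁ : 0 ≤ q₁) (h₂ : 0 ≤ q₂)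
    (h₃ : 0 ≤ q₃) (hs : q₀ + q₁ + q₂ + q₃ ≤ 1) (h₀₂ : 0 < q₀ + q₂) (h₁₃ : 0 < q₁ + q₃)
    (ha : a = q₀ * a + q₂ * b) (hb : b = q₁ * b + q₃ * a) : a = 0 ∧ b = 0 := by
  have hdet : 0 < (1 - q₀) * (1 - q₁) - q₂ * q₃ := by nlinarith
  have ha0 : a = 0 := by
    have : ((1 - q₀) * (1 - q₁) - q₂ * q₃) * a = 0 := by linear_combination (1 - q₁) * ha + q₂ * hb
    exact (mul_eq_zero.1 this).resolve_left hdet.ne'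
  refine ⟨ha0, ?_⟩
  have : ((1 - q₀) * (1 - q₁) - q₂ * q₃) * b = 0 := by linear_combination (1 - q₀) * hb + q₃ * ha
  exact (mul_eq_zero.1 this).resolve_left hdet.ne'

lemma toReal_ofReal_mul_add_ofReal_mul {a b : ℝ} (ha : 0 ≤ a) (hb : 0 ≤ b) {x y : ℝ≥0∞}
    (hx : x ≠ ∞) (hy : y ≠ ∞) :
    (ENNReal.ofReal a * x + ENNReal.ofReal b * y).toReal = a * x.toReal + b * y.toReal := by
  rw [ENNReal.toReal_add (by finiteness) (by finiteness), ENNReal.toReal_mul, ENNReal.toReal_mul,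
    ENNReal.toReal_ofReal ha, ENNReal.toReal_ofReal hb]

lemma tendsto_measure_compl_Icc (μ : Measure ℝ) [IsFiniteMeasure μ] :
    Tendsto (fun t : ℝ => μ (Icc (-t) (1 + t))ᶜ) atTop (𝓝 0) := by
  have hanti : Antitone fun t : ℝ => (Icc (-t) (1 + t))ᶜ := fun s t hst =>
    compl_subset_compl.2 (Icc_subset_Icc (by linarith) (by linarith))
  have hempty : ⋂ t : ℝ, (Icc (-t) (1 + t))ᶜ = ∅ :=
    eq_empty_of_forall_notMem fun x hx =>
      mem_iInter.1 hx |x| ⟨by linarith [neg_abs_le x], by linarith [le_abs_self x]⟩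
  simpa [Function.comp_def, hempty] using tendsto_measure_iInter_atTop
    (fun _ => measurableSet_Icc.compl.nullMeasurableSet) hanti ⟨0, measure_ne_top μ _⟩

lemma compl_Icc_subset_iUnion (a b : ℝ) :
    (Icc a b)ᶜ ⊆ ⋃ n : ℕ, (Icc (a - 1 / (n + 1)) (b + 1 / (n + 1)))ᶜ := by
  intro x hx
  have hd : 0 < max (a - x) (x - b) := by
    simp only [mem_compl_iff, mem_Icc, not_and_or, not_le] at hx
    rw [lt_max_iff]
    rcases hx with h | h
    · left; linarith
    · right; linarith
  obtain ⟨n, hn⟩ := exists_nat_one_div_lt hd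
  refine mem_iUnion.2 ⟨n, fun ⟨h₁, h₂⟩ => ?_⟩
  have := max_le (show a - x ≤ 1 / (n + 1) by linarith) (show x - b ≤ 1 / (n + 1) by linarith)
  linarith

lemma mss_eq_one_of_Ioo_subset {μ : Measure ℝ} [IsProbabilityMeasure μ] (hK : μ (Ioo 0 1)ᶜ = 0)
    {s : Set ℝ} (hs : Ioo 0 1 ⊆ s) : mss μ s = 1 := by
  have h₁ : μ (Ioo 0 1) = 1 := (prob_compl_eq_zero_iff measurableSet_Ioo).1 hK
  simp [mss, le_antisymm prob_le_one (h₁ ▸ measure_mono hs)]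

def massPair (μ : Measure ℝ) (J : Set ℝ) : Fin 2 → ℝ := ![mss μ J, mss μ (refl1 ⁻¹' J)]

lemma massPair_Ico {μ : Measure ℝ} [IsProbabilityMeasure μ] (hK : μ (Ioo 0 1)ᶜ = 0) :
    massPair μ (Ico 0 1) = ![1, 1] := by
  have h₀ := mss_eq_one_of_Ioo_subset hK Ioo_subset_Ico_self
  have h₁ := mss_eq_one_of_Ioo_subset hK (s := refl1 ⁻¹' Ico 0 1) fun x hx =>
    ⟨by simp only [refl1]; linarith [hx.2], by simp only [refl1]; linarith [hx.1]⟩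
  simp [massPair, h₀, h₁]

def IsSelfSimilar (ℓ : ℕ) (p : ℕ → ℝ) (μ : Measure ℝ) : Prop :=
  μ = ∑ i ∈ Finset.range (2 * ℓ), ENNReal.ofReal (p i) • μ.map (simMapT ℓ i)

namespace IsSelfSimilar

variable {ℓ : ℕ} {p : ℕ → ℝ} {μ : Measure ℝ}

lemma measure_eq (hμ : IsSelfSimilar ℓ p μ) (hℓ : 0 < ℓ) (E : Set ℝ) :
    μ E = ∑ i ∈ Finset.range (2 * ℓ), ENNReal.ofReal (p i) * μ (simMapT ℓ i ⁻¹' E) := by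
  conv_lhs => rw [hμ]
  simp only [Measure.coe_finsetSum, Finset.sum_apply, Measure.smul_apply, smul_eq_mul,
    (measurableEmbedding_simMapT hℓ).map_apply]

lemma measure_compl_le (hμ : IsSelfSimilar ℓ p μ) (hℓ : 0 < ℓ) (hp : ∀ i, 0 ≤ p i)
    (hsum : ∑ i ∈ Finset.range (2 * ℓ), p i = 1) {A B : Set ℝ}
    (hAB : ∀ i < ℓ, MapsTo (simMapT ℓ i) A B) (hA : MapsTo refl1 A A) : μ Bᶜ ≤ μ Aᶜ := by
  have hpre : ∀ c < 2 * ℓ, simMapT ℓ c ⁻¹' Bᶜ ⊆ Aᶜ := by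
    intro c hc x hxB hxA
    obtain ⟨j, hj, rfl | rfl⟩ := exists_lt_eq_or_eq_add hc
    · exact hxB (hAB _ hj hxA)
    · rw [simMapT_add_self hj] at hxB
      exact hxB (hAB j hj (hA hxA))
  calc μ Bᶜ = ∑ i ∈ Finset.range (2 * ℓ), ENNReal.ofReal (p i) * μ (simMapT ℓ i ⁻¹' Bᶜ) :=
        hμ.measure_eq hℓ _
    _ ≤ ∑ i ∈ Finset.range (2 * ℓ), ENNReal.ofReal (p i) * μ Aᶜ :=
        Finset.sum_le_sum fun i hi => by
          gcongr
          exact hpre i (Finset.mem_range.1 hi)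
    _ = μ Aᶜ := by
        rw [← Finset.sum_mul, ← ENNReal.ofReal_sum_of_nonneg fun i _ => hp i, hsum,
          ENNReal.ofReal_one, one_mul]

lemma measure_compl_Icc_eq_zero (hμ : IsSelfSimilar ℓ p μ) (hℓ : 2 ≤ ℓ) (hp : ∀ i, 0 ≤ p i)
    (hsum : ∑ i ∈ Finset.range (2 * ℓ), p i = 1) [IsFiniteMeasure μ] : μ (Icc 0 1)ᶜ = 0 := by
  -- the mass outside the `t`-neighbourhood of `[0,1]` does not decrease when `t` grows to `ℓ t`,
  -- yet it tends to `0` as `t → ∞`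
  have hiter : ∀ t n, μ (Icc (-t) (1 + t))ᶜ ≤ μ (Icc (-(ℓ ^ n * t)) (1 + ℓ ^ n * t))ᶜ := by
    intro t n
    induction n with
    | zero => simp
    | succ n ih =>
      refine ih.trans ?_
      rw [pow_succ', mul_assoc]
      exact hμ.measure_compl_le (by omega) hp hsum (fun i hi => mapsTo_simMapT_Icc hi _)
        (mapsTo_refl1_Icc _)
  have hzero : ∀ t > 0, μ (Icc (-t) (1 + t))ᶜ = 0 := by
    intro t ht
    have hlim : Tendsto (fun n : ℕ => (ℓ : ℝ) ^ n * t) atTop atTop :=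
      (tendsto_pow_atTop_atTop_of_one_lt (by exact_mod_cast hℓ)).atTop_mul_const ht
    exact le_antisymm (ge_of_tendsto' ((tendsto_measure_compl_Icc μ).comp hlim) (hiter t)) bot_le
  refine measure_mono_null (compl_Icc_subset_iUnion 0 1) (measure_iUnion_null fun n => ?_)
  simpa using hzero (1 / (n + 1)) Nat.one_div_pos_of_nat

lemma measure_eq_of_mapsTo (hμ : IsSelfSimilar ℓ p μ) {K E : Set ℝ} (hK : μ Kᶜ = 0)
    (hKrefl : MapsTo refl1 K K) {e : ℕ} (he : e < ℓ)
    (hE : ∀ j < ℓ, j ≠ e → MapsTo (simMapT ℓ j) K Eᶜ) :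
    μ E = ENNReal.ofReal (p e) * μ (simMapT ℓ e ⁻¹' E)
      + ENNReal.ofReal (p (e + ℓ)) * μ (refl1 ⁻¹' (simMapT ℓ e ⁻¹' E)) := by
  rw [hμ.measure_eq (by omega), Finset.sum_eq_add_of_mem e (e + ℓ) (Finset.mem_range.2 (by omega))
    (Finset.mem_range.2 (by omega)) (by omega), simMapT_add_self he, preimage_comp]
  rintro c hc ⟨hce, hceℓ⟩
  suffices simMapT ℓ c ⁻¹' E ⊆ Kᶜ by rw [measure_mono_null this hK, mul_zero]
  intro x hxE hxK
  obtain ⟨j, hj, rfl | rfl⟩ := exists_lt_eq_or_eq_add (Finset.mem_range.1 hc)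
  · exact hE _ hj hce hxK hxE
  · rw [simMapT_add_self hj] at hxE
    exact hE j hj (by omega) (hKrefl hxK) hxE

lemma measure_singleton_zero_and_one_eq (hμ : IsSelfSimilar ℓ p μ) (hℓ : 2 ≤ ℓ)
    (hp : ∀ i, 0 ≤ p i) (hsum : ∑ i ∈ Finset.range (2 * ℓ), p i = 1) [IsFiniteMeasure μ] :
    μ {0} = ENNReal.ofReal (p 0) * μ {0} + ENNReal.ofReal (p ℓ) * μ {1} ∧
      μ {1} = ENNReal.ofReal (p (ℓ - 1)) * μ {1} + ENNReal.ofReal (p (ℓ - 1 + ℓ)) * μ {0} := by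
  have hK := hμ.measure_compl_Icc_eq_zero hℓ hp hsum
  have hKrefl : MapsTo refl1 (Icc 0 1) (Icc 0 1) := by simpa using mapsTo_refl1_Icc 0
  have hℓ' : (2 : ℝ) ≤ ℓ := by exact_mod_cast hℓ
  have e₀ := hμ.measure_eq_of_mapsTo (E := {0}) hK hKrefl (e := 0) (by omega)
    fun j hj hj0 x hx => by
      have : (1 : ℝ) ≤ j := by exact_mod_cast Nat.one_le_iff_ne_zero.2 hj0
      rw [mem_compl_singleton_iff, simMapT_of_lt hj]
      exact (div_pos (by linarith [hx.1]) (by linarith)).ne'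
  have e₁ := hμ.measure_eq_of_mapsTo (E := {1}) hK hKrefl (e := ℓ - 1) (by omega)
    fun j hj hj1 x hx => by
      have : (j : ℝ) + 2 ≤ ℓ := by exact_mod_cast (show j + 2 ≤ ℓ by omega)
      rw [mem_compl_singleton_iff, simMapT_of_lt hj]
      exact ((div_lt_one (by linarith)).2 (by linarith [hx.2])).ne
  simp only [preimage_simMapT_singleton (show 0 < ℓ by omega),
    preimage_simMapT_singleton (show ℓ - 1 < ℓ by omega), preimage_refl1_singleton,
    Nat.cast_sub (show 1 ≤ ℓ by omega)] at e₀ e₁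
  norm_num at e₀ e₁
  exact ⟨e₀, e₁⟩

lemma measure_singleton_zero_and_one_eq_zero (hμ : IsSelfSimilar ℓ p μ) (hℓ : 2 ≤ ℓ)
    (hp : ∀ i, 0 ≤ p i) (hsum : ∑ i ∈ Finset.range (2 * ℓ), p i = 1)
    (hpos : ∀ i < ℓ, 0 < p i + p (i + ℓ)) [IsFiniteMeasure μ] : μ {0} = 0 ∧ μ {1} = 0 := by
  obtain ⟨e₀, e₁⟩ := hμ.measure_singleton_zero_and_one_eq hℓ hp hsum
  have hs : p 0 + p (ℓ - 1) + p ℓ + p (ℓ - 1 + ℓ) ≤ 1 := by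
    have hsub : ({0, ℓ - 1, ℓ, ℓ - 1 + ℓ} : Finset ℕ) ⊆ Finset.range (2 * ℓ) := by
      intro i
      simp only [Finset.mem_insert, Finset.mem_singleton, Finset.mem_range]
      omega
    refine le_of_eq_of_le ?_ ((Finset.sum_le_sum_of_subset_of_nonneg hsub fun i _ _ => hp i).trans
      hsum.le)
    rw [Finset.sum_insert (by simp; omega), Finset.sum_insert (by simp; omega),
      Finset.sum_pair (by omega)]
    ring
  have r₀ : (μ {0}).toReal = p 0 * (μ {0}).toReal + p ℓ * (μ {1}).toReal := by
    conv_lhs => rw [e₀]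
    exact toReal_ofReal_mul_add_ofReal_mul (hp _) (hp _) (measure_ne_top _ _) (measure_ne_top _ _)
  have r₁ : (μ {1}).toReal = p (ℓ - 1) * (μ {1}).toReal + p (ℓ - 1 + ℓ) * (μ {0}).toReal := by
    conv_lhs => rw [e₁]
    exact toReal_ofReal_mul_add_ofReal_mul (hp _) (hp _) (measure_ne_top _ _) (measure_ne_top _ _)
  obtain ⟨h₀, h₁⟩ := eq_zero_of_fixedPoint (hp 0) (hp (ℓ - 1)) (hp ℓ) (hp (ℓ - 1 + ℓ)) hs
    (by simpa using hpos 0 (by omega)) (hpos (ℓ - 1) (by omega)) r₀ r₁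
  exact ⟨(ENNReal.toReal_eq_zero_iff _).1 h₀ |>.resolve_right (measure_ne_top _ _),
    (ENNReal.toReal_eq_zero_iff _).1 h₁ |>.resolve_right (measure_ne_top _ _)⟩

lemma measure_compl_Ioo_eq_zero (hμ : IsSelfSimilar ℓ p μ) (hℓ : 2 ≤ ℓ) (hp : ∀ i, 0 ≤ p i)
    (hsum : ∑ i ∈ Finset.range (2 * ℓ), p i = 1) (hpos : ∀ i < ℓ, 0 < p i + p (i + ℓ))
    [IsFiniteMeasure μ] : μ (Ioo 0 1)ᶜ = 0 := by
  obtain ⟨h₀, h₁⟩ := hμ.measure_singleton_zero_and_one_eq_zero hℓ hp hsum hpos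
  refine measure_mono_null (fun x hx => ?_)
    (measure_union_null (measure_union_null (hμ.measure_compl_Icc_eq_zero hℓ hp hsum) h₀) h₁)
  simp only [mem_compl_iff, mem_Ioo, mem_union, mem_Icc, mem_singleton_iff] at hx ⊢
  grind

lemma mss_image_simMapT (hμ : IsSelfSimilar ℓ p μ) (hp : ∀ i, 0 ≤ p i) [IsFiniteMeasure μ]
    (hK : μ (Ioo 0 1)ᶜ = 0) {e : ℕ} (he : e < ℓ) {J : Set ℝ} (hJ : J ⊆ Icc 0 1) :
    mss μ (simMapT ℓ e '' J) = p e * mss μ J + p (e + ℓ) * mss μ (refl1 ⁻¹' J) := by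
  have hℓ : (ℓ : ℝ) ≠ 0 := by norm_cast; omega
  rw [mss, hμ.measure_eq_of_mapsTo hK mapsTo_refl1_Ioo he ?_,
    (simMapT_injective (by omega)).preimage_image]
  · exact toReal_ofReal_mul_add_ofReal_mul (hp _) (hp _) (measure_ne_top _ _) (measure_ne_top _ _)
  -- `S_j` maps `(0,1)` into the open `j`-th cell, which misses the closed `e`-th cell
  rintro j hj hje x hx ⟨y, hy, hyx⟩
  rw [simMapT_of_lt he, simMapT_of_lt hj, div_left_inj' hℓ] at hyx
  have h₁ : (e : ℝ) < j + 1 := by linarith [hx.2, (hJ hy).1]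
  have h₂ : (j : ℝ) < e + 1 := by linarith [hx.1, (hJ hy).2]
  have h₁ : e < j + 1 := by exact_mod_cast h₁
  have h₂ : j < e + 1 := by exact_mod_cast h₂
  omega

lemma massPair_image_simMapT (hμ : IsSelfSimilar ℓ p μ) (hp : ∀ i, 0 ≤ p i) [IsFiniteMeasure μ]
    (hK : μ (Ioo 0 1)ᶜ = 0) {e : ℕ} (he : e < ℓ) {J : Set ℝ} (hJ : J ⊆ Icc 0 1) :
    massPair μ (simMapT ℓ e '' J) = MmatT ℓ p e *ᵥ massPair μ J := by
  have hJ' : refl1 ⁻¹' J ⊆ Icc 0 1 := fun x hx => by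
    have := hJ hx
    simp only [refl1, mem_Icc] at this ⊢
    constructor <;> linarith
  have h₂ := hμ.mss_image_simMapT hp hK (show ℓ - 1 - e < ℓ by omega) hJ'
  rw [preimage_preimage, show ℓ - 1 - e + ℓ = 2 * ℓ - 1 - e by omega] at h₂
  ext k
  fin_cases k
  · simp [massPair, MmatT, Matrix.mulVec, dotProduct, hμ.mss_image_simMapT hp hK he hJ]
  · simp [massPair, MmatT, Matrix.mulVec, dotProduct, preimage_refl1_image_simMapT he, h₂,
      refl1_involutive _, add_comm]

lemma massPair_wordI (hμ : IsSelfSimilar ℓ p μ) (hp : ∀ i, 0 ≤ p i) [IsProbabilityMeasure μ]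
    (hK : μ (Ioo 0 1)ᶜ = 0) {n : ℕ} (ε : Fin n → ℕ) (hε : ∀ i, ε i < ℓ) :
    massPair μ (wordI ℓ n ε) = (List.ofFn fun i => MmatT ℓ p (ε i)).prod *ᵥ ![1, 1] := by
  induction n with
  | zero => simp [wordI_zero, massPair_Ico hK]
  | succ n ih =>
    rw [wordI_succ ε (hε 0), hμ.massPair_image_simMapT hp hK (hε 0)
      (wordI_subset_Icc (Fin.tail ε) fun i => hε _), ih (Fin.tail ε) fun i => hε _, List.ofFn_succ,
      List.prod_cons, Matrix.mulVec_mulVec]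
    rfl

end IsSelfSimilar

/-- `μ(I_{ε₁⋯ε_n}) = ‖M_{ε₁}⋯M_{ε_n}‖₁` for the self-similar measure `μ`. -/
theorem stmt4 (ℓ : ℕ) (hℓ : 2 ≤ ℓ) (p : ℕ → ℝ) (hp : ∀ i, 0 ≤ p i)
    (hsum : ∑ i ∈ Finset.range (2 * ℓ), p i = 1)
    (hpos : ∀ i < ℓ, 0 < p i + p (i + ℓ))
    (μ : Measure ℝ) [IsProbabilityMeasure μ]
    (hself : μ = ∑ i ∈ Finset.range (2 * ℓ), ENNReal.ofReal (p i) • μ.map (simMapT ℓ i))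
    (n : ℕ) (ε : Fin n → ℕ) (hε : ∀ i, ε i < ℓ) :
    mss μ (wordI ℓ n ε) = normOne (List.ofFn (fun i => MmatT ℓ p (ε i))).prod := by
  have hμ : IsSelfSimilar ℓ p μ := hself
  have hK := hμ.measure_compl_Ioo_eq_zero hℓ hp hsum hpos
  simpa [massPair, normOne, Matrix.mulVec, dotProduct] using
    congr_fun (hμ.massPair_wordI hp hK ε hε) 0

end
end

section
/- With ν = (μ + μ∘T)/2 and the matrix representation ν(I) = ‖M_I‖ (half the sum of all entries of the product matrix M_I = M_{ε₁}⋯M_{ε_n}), one has ν(IJ) ≤ 2 ν(I) ν(J) for all ℓ-adic intervals I, J, and consequently the sequence v_n = Σ_{I∈F_n} ν(I)^q satisfies, for each fixed q ∈ ℝ, that v_n^{1/n} converges. -/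
open MeasureTheory Filter Topology ENNReal

noncomputable section

/-!
Pulled back along the digit map `x ↦ ℓx - ε`, the self-similarity relation keeps only the
maps `S_ε` and `S_{ε+ℓ}` (the other pieces of `μ` live outside `(0,1)`), and `S_{ε+ℓ}` is
`S_ε` composed with `T`. Hence the pair `(μ J, μ (T⁻¹ J))` is multiplied by `M_ε` when `J` is
replaced by its preimage, and iterating over a word gives `ν(I) = ‖M_I‖`. For nonnegative
`2 × 2` matrices `‖AB‖ ≤ 2‖A‖‖B‖`, which is `ν(IJ) ≤ 2ν(I)ν(J)`; the row sums of every `M_ε` are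
at least `δ > 0`, so `ν(I) ≥ δⁿ`. Then `2^q v_{n+m} ≤ (2^q v_n)(2^q v_m)` for `q ≥ 0` (the
reverse for `q < 0`), and Fekete's lemma gives the convergence of `v_n^{1/n}`.

That `μ` is carried by `(0,1)` needs two facts: the mass outside `[-t, 1+t]` is at most the mass
outside `[-ℓt, 1+ℓt]`, hence zero; and the atoms at `0` and `1` satisfy a contracting linear
system.
-/

open Finset
open scoped Matrix

section SelfSimilar

variable {ℓ : ℕ} {p : ℕ → ℝ} {μ : Measure ℝ}

lemma measurable_simMapT (ℓ i : ℕ) : Measurable (simMapT ℓ i) := by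
  unfold simMapT; split_ifs <;> fun_prop

lemma measurable_refl1 : Measurable refl1 := by
  unfold refl1; fun_prop

lemma natCast_mul_simMapT_of_lt (hℓ : ℓ ≠ 0) {i : ℕ} (hi : i < ℓ) (x : ℝ) :
    ℓ * simMapT ℓ i x = x + i := by
  simp only [simMapT, if_pos hi]
  field_simp

lemma natCast_mul_simMapT_of_le (hℓ : ℓ ≠ 0) {i : ℕ} (hi : ℓ ≤ i) (x : ℝ) :
    ℓ * simMapT ℓ i x = (i - ℓ + 1 : ℝ) - x := by
  simp only [simMapT, if_neg (not_lt.2 hi), Nat.cast_add, Nat.cast_sub hi, Nat.cast_one]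
  field_simp
  ring

lemma measureReal_eq_sum_simMapT [IsFiniteMeasure μ] (hp : ∀ i, 0 ≤ p i)
    (hself : μ = ∑ i ∈ range (2 * ℓ), ENNReal.ofReal (p i) • μ.map (simMapT ℓ i))
    {A : Set ℝ} (hA : MeasurableSet A) :
    μ.real A = ∑ i ∈ range (2 * ℓ), p i * μ.real (simMapT ℓ i ⁻¹' A) := by
  have h : μ A = ∑ i ∈ range (2 * ℓ), ENNReal.ofReal (p i) * μ (simMapT ℓ i ⁻¹' A) := by
    conv_lhs => rw [hself]
    rw [Measure.finsetSum_apply]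
    refine sum_congr rfl fun i _ => ?_
    rw [Measure.smul_apply, Measure.map_apply (measurable_simMapT ℓ i) hA, smul_eq_mul]
  rw [measureReal_def, h, ENNReal.toReal_sum fun i _ => by finiteness]
  simp only [ENNReal.toReal_mul, ENNReal.toReal_ofReal (hp _), measureReal_def]

lemma measureReal_le_of_preimage_simMapT_subset [IsFiniteMeasure μ] (hp : ∀ i, 0 ≤ p i)
    (hsum : ∑ i ∈ range (2 * ℓ), p i = 1)
    (hself : μ = ∑ i ∈ range (2 * ℓ), ENNReal.ofReal (p i) • μ.map (simMapT ℓ i))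
    {A B : Set ℝ} (hA : MeasurableSet A) (hAB : ∀ i < 2 * ℓ, simMapT ℓ i ⁻¹' A ⊆ B) :
    μ.real A ≤ μ.real B := by
  rw [measureReal_eq_sum_simMapT hp hself hA]
  calc ∑ i ∈ range (2 * ℓ), p i * μ.real (simMapT ℓ i ⁻¹' A)
      ≤ ∑ i ∈ range (2 * ℓ), p i * μ.real B := by
        refine sum_le_sum fun i hi => ?_
        exact mul_le_mul_of_nonneg_left (measureReal_mono (hAB i (mem_range.1 hi))) (hp i)
    _ = μ.real B := by rw [← sum_mul, hsum, one_mul]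

lemma mapsTo_simMapT (hℓ : ℓ ≠ 0) {i : ℕ} (hi : i < 2 * ℓ) {t : ℝ} :
    Set.MapsTo (simMapT ℓ i) (Set.Icc (-(ℓ * t)) (1 + ℓ * t)) (Set.Icc (-t) (1 + t)) := by
  have hℓ' : (0 : ℝ) < ℓ := by positivity
  rintro x ⟨hx₀, hx₁⟩
  rcases lt_or_ge i ℓ with h | h
  · have hiℓ : (i : ℝ) + 1 ≤ ℓ := by exact_mod_cast h
    have := natCast_mul_simMapT_of_lt hℓ h x
    constructor <;> nlinarith [(i.cast_nonneg : (0 : ℝ) ≤ i)]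
  · have hiℓ : (i : ℝ) + 1 ≤ 2 * ℓ := by exact_mod_cast hi
    have hℓi : (ℓ : ℝ) ≤ i := by exact_mod_cast h
    have := natCast_mul_simMapT_of_le hℓ h x
    constructor <;> nlinarith

lemma measureReal_compl_Icc_le_pow [IsFiniteMeasure μ] (hℓ : ℓ ≠ 0) (hp : ∀ i, 0 ≤ p i)
    (hsum : ∑ i ∈ range (2 * ℓ), p i = 1)
    (hself : μ = ∑ i ∈ range (2 * ℓ), ENNReal.ofReal (p i) • μ.map (simMapT ℓ i)) (t : ℝ) :
    ∀ n : ℕ, μ.real (Set.Icc (-t) (1 + t))ᶜ ≤ μ.real (Set.Icc (-(ℓ ^ n * t)) (1 + ℓ ^ n * t))ᶜ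
  | 0 => by simp
  | n + 1 => by
    refine (measureReal_compl_Icc_le_pow hℓ hp hsum hself t n).trans ?_
    rw [pow_succ, mul_comm _ (ℓ : ℝ), mul_assoc]
    exact measureReal_le_of_preimage_simMapT_subset hp hsum hself measurableSet_Icc.compl
      fun i hi => Set.compl_subset_compl.2 (mapsTo_simMapT hℓ hi)

lemma measure_compl_Icc_eq_zero_of_pos [IsFiniteMeasure μ] (hℓ : 2 ≤ ℓ) (hp : ∀ i, 0 ≤ p i)
    (hsum : ∑ i ∈ range (2 * ℓ), p i = 1)
    (hself : μ = ∑ i ∈ range (2 * ℓ), ENNReal.ofReal (p i) • μ.map (simMapT ℓ i))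
    {t : ℝ} (ht : 0 < t) : μ (Set.Icc (-t) (1 + t))ᶜ = 0 := by
  have htight : Tendsto (fun s => μ.real (Metric.closedBall 0 s)ᶜ) atTop (𝓝 0) := by
    have := tendsto_measure_compl_closedBall_of_isTightMeasureSet
      (isTightMeasureSet_singleton (μ := μ)) (0 : ℝ)
    simp only [Set.mem_singleton_iff, iSup_iSup_eq_left] at this
    simpa [Function.comp_def, Measure.real] using
      (ENNReal.tendsto_toReal ENNReal.zero_ne_top).comp this
  have hgrow : Tendsto (fun n : ℕ => (ℓ : ℝ) ^ n * t) atTop atTop :=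
    (tendsto_pow_atTop_atTop_of_one_lt (by exact_mod_cast hℓ)).atTop_mul_const ht
  refine (measureReal_eq_zero_iff).1 (le_antisymm ?_ measureReal_nonneg)
  refine ge_of_tendsto' (htight.comp hgrow) fun n =>
    (measureReal_compl_Icc_le_pow (by omega) hp hsum hself t n).trans ?_
  refine measureReal_mono (Set.compl_subset_compl.2 fun x hx => ?_)
  rw [Metric.mem_closedBall, Real.dist_eq, sub_zero, abs_le] at hx
  constructor <;> linarith

lemma measure_compl_Icc_eq_zero [IsFiniteMeasure μ] (hℓ : 2 ≤ ℓ) (hp : ∀ i, 0 ≤ p i)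
    (hsum : ∑ i ∈ range (2 * ℓ), p i = 1)
    (hself : μ = ∑ i ∈ range (2 * ℓ), ENNReal.ofReal (p i) • μ.map (simMapT ℓ i)) :
    μ (Set.Icc 0 1)ᶜ = 0 := by
  refine measure_mono_null (fun x hx => ?_) (measure_iUnion_null fun n : ℕ =>
    measure_compl_Icc_eq_zero_of_pos hℓ hp hsum hself (t := 1 / ((n : ℝ) + 1)) (by positivity))
  rw [Set.mem_compl_iff, Set.mem_Icc, not_and_or, not_le, not_le] at hx
  rcases hx with hx | hx
  · obtain ⟨n, hn⟩ := exists_nat_one_div_lt (neg_pos.2 hx)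
    exact Set.mem_iUnion.2 ⟨n, fun h => by linarith [h.1]⟩
  · obtain ⟨n, hn⟩ := exists_nat_one_div_lt (sub_pos.2 hx)
    exact Set.mem_iUnion.2 ⟨n, fun h => by linarith [h.2]⟩

lemma simMapT_eq_zero (hℓ : ℓ ≠ 0) {i : ℕ} {x : ℝ} (hx : x ∈ Set.Icc 0 1)
    (h : simMapT ℓ i x = 0) : (i = 0 ∧ x = 0) ∨ (i = ℓ ∧ x = 1) := by
  obtain ⟨hx₀, hx₁⟩ := hx
  rcases lt_or_ge i ℓ with hiℓ | hiℓ
  · have := natCast_mul_simMapT_of_lt hℓ hiℓ x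
    rw [h, mul_zero] at this
    have hi0 : (i : ℝ) = 0 := le_antisymm (by linarith) i.cast_nonneg
    exact Or.inl ⟨by exact_mod_cast hi0, by linarith⟩
  · have := natCast_mul_simMapT_of_le hℓ hiℓ x
    rw [h, mul_zero] at this
    have hi : (i : ℝ) ≤ ℓ := by linarith
    have hi' : (ℓ : ℝ) ≤ i := by exact_mod_cast hiℓ
    exact Or.inr ⟨le_antisymm (by exact_mod_cast hi) hiℓ, by linarith⟩

lemma simMapT_eq_one (hℓ : ℓ ≠ 0) {i : ℕ} (hi : i < 2 * ℓ) {x : ℝ} (hx : x ∈ Set.Icc 0 1)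
    (h : simMapT ℓ i x = 1) : (i = ℓ - 1 ∧ x = 1) ∨ (i = 2 * ℓ - 1 ∧ x = 0) := by
  obtain ⟨hx₀, hx₁⟩ := hx
  rcases lt_or_ge i ℓ with hiℓ | hiℓ
  · have := natCast_mul_simMapT_of_lt hℓ hiℓ x
    rw [h, mul_one] at this
    have hi : (ℓ : ℝ) ≤ i + 1 := by linarith
    have hi' : (i : ℝ) + 1 ≤ ℓ := by exact_mod_cast hiℓ
    have hiℓ' : ℓ ≤ i + 1 := by exact_mod_cast hi
    exact Or.inl ⟨by omega, by linarith⟩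
  · have := natCast_mul_simMapT_of_le hℓ hiℓ x
    rw [h, mul_one] at this
    have hi₁ : (2 * ℓ : ℝ) ≤ i + 1 := by linarith
    have hi₂ : (i : ℝ) + 1 ≤ 2 * ℓ := by exact_mod_cast hi
    have hi₃ : 2 * ℓ ≤ i + 1 := by exact_mod_cast hi₁
    exact Or.inr ⟨by omega, by linarith⟩

lemma measureReal_singleton_le [IsFiniteMeasure μ] (hp : ∀ i, 0 ≤ p i)
    (hself : μ = ∑ i ∈ range (2 * ℓ), ENNReal.ofReal (p i) • μ.map (simMapT ℓ i))
    (hsupp : μ (Set.Icc 0 1)ᶜ = 0) {y xa xb : ℝ} {a b : ℕ} (ha : a < 2 * ℓ) (hb : b < 2 * ℓ)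
    (hab : a ≠ b) (hy : ∀ i < 2 * ℓ, ∀ x ∈ Set.Icc 0 1, simMapT ℓ i x = y →
      (i = a ∧ x = xa) ∨ (i = b ∧ x = xb)) :
    μ.real {y} ≤ p a * μ.real {xa} + p b * μ.real {xb} := by
  have hle {i : ℕ} {s : Set ℝ} (h : simMapT ℓ i ⁻¹' {y} ∩ Set.Icc 0 1 ⊆ s) :
      μ.real (simMapT ℓ i ⁻¹' {y}) ≤ μ.real s := by
    calc μ.real (simMapT ℓ i ⁻¹' {y}) ≤ μ.real (s ∪ (Set.Icc 0 1)ᶜ) :=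
          measureReal_mono fun x hx =>
            (em (x ∈ Set.Icc 0 1)).elim (fun h' => Or.inl (h ⟨hx, h'⟩)) Or.inr
      _ ≤ μ.real s + μ.real (Set.Icc 0 1)ᶜ := measureReal_union_le _ _
      _ = μ.real s := by rw [(measureReal_eq_zero_iff).2 hsupp, add_zero]
  rw [measureReal_eq_sum_simMapT hp hself (measurableSet_singleton y),
    sum_eq_add_of_mem a b (mem_range.2 ha) (mem_range.2 hb) hab ?_]
  · refine add_le_add (mul_le_mul_of_nonneg_left (hle fun x ⟨hx, hx'⟩ => ?_) (hp a))
      (mul_le_mul_of_nonneg_left (hle fun x ⟨hx, hx'⟩ => ?_) (hp b))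
    · exact (hy a ha x hx' hx).elim And.right fun h => absurd h.1 hab
    · exact (hy b hb x hx' hx).elim (fun h => absurd h.1 hab.symm) And.right
  · intro c hc ⟨hca, hcb⟩
    have : μ.real (simMapT ℓ c ⁻¹' {y}) ≤ μ.real ∅ := hle fun x ⟨hx, hx'⟩ => by
      rcases hy c (mem_range.1 hc) x hx' hx with h | h
      exacts [hca h.1, hcb h.1]
    rw [le_antisymm (this.trans_eq measureReal_empty) measureReal_nonneg, mul_zero]

lemma eq_zero_of_le_mul_add_mul {a b s t u v : ℝ} (ha : 0 ≤ a) (hb : 0 ≤ b) (ht : 0 ≤ t)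
    (hv : 0 ≤ v) (hst : s + t < 1) (huv : u + v < 1)
    (h₁ : a ≤ s * a + t * b) (h₂ : b ≤ u * b + v * a) : a = 0 ∧ b = 0 := by
  rcases le_total a b with h | h
  · have : b = 0 := by nlinarith [mul_le_mul_of_nonneg_left h hv]
    exact ⟨by linarith, this⟩
  · have : a = 0 := by nlinarith [mul_le_mul_of_nonneg_left h ht]
    exact ⟨this, by linarith⟩

lemma measure_compl_Ioo_eq_zero [IsProbabilityMeasure μ] (hℓ : 2 ≤ ℓ) (hp : ∀ i, 0 ≤ p i)
    (hsum : ∑ i ∈ range (2 * ℓ), p i = 1) (hpos : ∀ i < ℓ, 0 < p i + p (i + ℓ))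
    (hself : μ = ∑ i ∈ range (2 * ℓ), ENNReal.ofReal (p i) • μ.map (simMapT ℓ i)) :
    μ (Set.Ioo 0 1)ᶜ = 0 := by
  have hsupp := measure_compl_Icc_eq_zero hℓ hp hsum hself
  have h₀ := measureReal_singleton_le (a := 0) (b := ℓ) hp hself hsupp (by omega) (by omega)
    (by omega) fun _ _ _ hx h => simMapT_eq_zero (by omega) hx h
  have h₁ := measureReal_singleton_le (a := ℓ - 1) (b := 2 * ℓ - 1) hp hself hsupp (by omega)
    (by omega) (by omega) fun i hi x hx h => simMapT_eq_one (by omega) hi hx h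
  have hfour : p 0 + p ℓ + (p (ℓ - 1) + p (2 * ℓ - 1)) ≤ 1 := by
    have hsub : ({0, ℓ, ℓ - 1, 2 * ℓ - 1} : Finset ℕ) ⊆ range (2 * ℓ) := by
      intro i; simp only [mem_insert, mem_singleton, mem_range]; omega
    have := sum_le_sum_of_subset_of_nonneg hsub fun i _ _ => hp i
    rw [sum_insert (by simp only [mem_insert, mem_singleton]; omega),
      sum_insert (by simp only [mem_insert, mem_singleton]; omega),
      sum_pair (by omega), hsum] at this
    linarith
  have hpos₀ : 0 < p 0 + p ℓ := by simpa using hpos 0 (by omega)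
  have hpos₁ : 0 < p (ℓ - 1) + p (2 * ℓ - 1) := by
    simpa [show ℓ - 1 + ℓ = 2 * ℓ - 1 by omega] using hpos (ℓ - 1) (by omega)
  obtain ⟨hz₀, hz₁⟩ := eq_zero_of_le_mul_add_mul measureReal_nonneg measureReal_nonneg (hp _)
    (hp _) (by linarith [hp 0, hp ℓ, hp (ℓ - 1), hp (2 * ℓ - 1)])
    (by linarith [hp 0, hp ℓ, hp (ℓ - 1), hp (2 * ℓ - 1)]) h₀ h₁
  refine measure_mono_null (fun x hx => ?_) (measure_union_null (measure_union_null hsupp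
    ((measureReal_eq_zero_iff).1 hz₀)) ((measureReal_eq_zero_iff).1 hz₁))
  simp only [Set.mem_compl_iff, Set.mem_Ioo, Set.mem_union, Set.mem_Icc,
    Set.mem_singleton_iff] at hx ⊢
  grind

end SelfSimilar

section DigitMaps

variable {ℓ : ℕ} {p : ℕ → ℝ} {μ : Measure ℝ}

lemma preimage_digit_comp_simMapT_subset (hℓ : ℓ ≠ 0) {ε i : ℕ} (hiε : i ≠ ε)
    (hiεℓ : i ≠ ε + ℓ) :
    simMapT ℓ i ⁻¹' ((fun x : ℝ => ℓ * x - ε) ⁻¹' Set.Icc 0 1) ⊆ (Set.Ioo 0 1)ᶜ := by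
  rintro x ⟨hJ₀, hJ₁⟩ ⟨hx₀, hx₁⟩
  simp only at hJ₀ hJ₁
  rcases lt_or_ge i ℓ with hiℓ | hiℓ
  · rw [natCast_mul_simMapT_of_lt hℓ hiℓ] at hJ₀ hJ₁
    rcases Nat.lt_or_gt_of_ne hiε with h | h
    · have : (i : ℝ) + 1 ≤ ε := by exact_mod_cast h
      linarith
    · have : (ε : ℝ) + 1 ≤ i := by exact_mod_cast h
      linarith
  · rw [natCast_mul_simMapT_of_le hℓ hiℓ] at hJ₀ hJ₁
    rcases Nat.lt_or_gt_of_ne hiεℓ with h | h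
    · have : (i : ℝ) + 1 ≤ ε + ℓ := by exact_mod_cast h
      linarith
    · have : (ε : ℝ) + ℓ + 1 ≤ i := by exact_mod_cast h
      linarith

lemma measureReal_preimage_digit [IsFiniteMeasure μ] (hp : ∀ i, 0 ≤ p i)
    (hself : μ = ∑ i ∈ range (2 * ℓ), ENNReal.ofReal (p i) • μ.map (simMapT ℓ i))
    (hsupp : μ (Set.Ioo 0 1)ᶜ = 0) {J : Set ℝ} (hJm : MeasurableSet J)
    (hJ : J ⊆ Set.Icc 0 1) {ε : ℕ} (hε : ε < ℓ) :
    μ.real ((fun x : ℝ => ℓ * x - ε) ⁻¹' J) =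
      p ε * μ.real J + p (ε + ℓ) * μ.real (refl1 ⁻¹' J) := by
  have hℓ : ℓ ≠ 0 := by omega
  rw [measureReal_eq_sum_simMapT hp hself (hJm.preimage (by fun_prop)),
    sum_eq_add_of_mem ε (ε + ℓ) (mem_range.2 (by omega)) (mem_range.2 (by omega)) (by omega)]
  · have h₁ : simMapT ℓ ε ⁻¹' ((fun x : ℝ => ℓ * x - ε) ⁻¹' J) = J := by
      ext x
      simp [natCast_mul_simMapT_of_lt hℓ hε]
    have h₂ : simMapT ℓ (ε + ℓ) ⁻¹' ((fun x : ℝ => ℓ * x - ε) ⁻¹' J) = refl1 ⁻¹' J := by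
      ext x
      simp [natCast_mul_simMapT_of_le hℓ (Nat.le_add_left ℓ ε), refl1]
      ring_nf
    rw [h₁, h₂]
  · rintro i - ⟨hiε, hiεℓ⟩
    refine mul_eq_zero_of_right _ ((measureReal_eq_zero_iff).2 (measure_mono_null ?_ hsupp))
    exact (Set.preimage_mono (Set.preimage_mono hJ)).trans
      (preimage_digit_comp_simMapT_subset hℓ hiε hiεℓ)

lemma measureReal_refl1_preimage_digit [IsFiniteMeasure μ] (hp : ∀ i, 0 ≤ p i)
    (hself : μ = ∑ i ∈ range (2 * ℓ), ENNReal.ofReal (p i) • μ.map (simMapT ℓ i))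
    (hsupp : μ (Set.Ioo 0 1)ᶜ = 0) {J : Set ℝ} (hJm : MeasurableSet J)
    (hJ : J ⊆ Set.Icc 0 1) {ε : ℕ} (hε : ε < ℓ) :
    μ.real (refl1 ⁻¹' ((fun x : ℝ => ℓ * x - ε) ⁻¹' J)) =
      p (2 * ℓ - 1 - ε) * μ.real J + p (ℓ - 1 - ε) * μ.real (refl1 ⁻¹' J) := by
  have hconj : refl1 ⁻¹' ((fun x : ℝ => ℓ * x - ε) ⁻¹' J) =
      (fun x : ℝ => ℓ * x - (ℓ - 1 - ε : ℕ)) ⁻¹' (refl1 ⁻¹' J) := by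
    ext x
    simp only [Set.mem_preimage, refl1, Nat.cast_sub (by omega : 1 + ε ≤ ℓ), Nat.sub_sub]
    push_cast
    ring_nf
  have hJ' : refl1 ⁻¹' J ⊆ Set.Icc 0 1 := fun x hx => by
    obtain ⟨h₀, h₁⟩ := hJ hx
    simp only [refl1] at h₀ h₁
    constructor <;> linarith
  have hinv : refl1 ⁻¹' (refl1 ⁻¹' J) = J := by
    ext x
    simp [refl1]
  rw [hconj, measureReal_preimage_digit hp hself hsupp (hJm.preimage measurable_refl1) hJ'
    (by omega), hinv, show ℓ - 1 - ε + ℓ = 2 * ℓ - 1 - ε by omega, add_comm]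

def massVec (μ : Measure ℝ) (s : Set ℝ) : Fin 2 → ℝ := ![μ.real s, μ.real (refl1 ⁻¹' s)]

lemma massVec_preimage_digit [IsFiniteMeasure μ] (hp : ∀ i, 0 ≤ p i)
    (hself : μ = ∑ i ∈ range (2 * ℓ), ENNReal.ofReal (p i) • μ.map (simMapT ℓ i))
    (hsupp : μ (Set.Ioo 0 1)ᶜ = 0) {J : Set ℝ} (hJm : MeasurableSet J)
    (hJ : J ⊆ Set.Icc 0 1) {ε : ℕ} (hε : ε < ℓ) :
    massVec μ ((fun x : ℝ => ℓ * x - ε) ⁻¹' J) = MmatT ℓ p ε *ᵥ massVec μ J := by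
  ext i
  fin_cases i <;> simp [massVec, MmatT, Matrix.mulVec, dotProduct, Fin.sum_univ_two,
    measureReal_preimage_digit hp hself hsupp hJm hJ hε,
    measureReal_refl1_preimage_digit hp hself hsupp hJm hJ hε]

end DigitMaps

section Words

variable {ℓ : ℕ}

def wordVal (ℓ n : ℕ) (ε : Fin n → ℕ) : ℝ := ∑ i : Fin n, (ε i : ℝ) / ℓ ^ ((i : ℕ) + 1)

lemma wordI_eq_Ico (n : ℕ) (ε : Fin n → ℕ) :
    wordI ℓ n ε = Set.Ico (wordVal ℓ n ε) (wordVal ℓ n ε + 1 / ℓ ^ n) := rfl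

lemma measurableSet_wordI {n : ℕ} {ε : Fin n → ℕ} : MeasurableSet (wordI ℓ n ε) :=
  measurableSet_Ico

lemma wordVal_succ {n : ℕ} (ε : Fin (n + 1) → ℕ) :
    wordVal ℓ (n + 1) ε = (ε 0 + wordVal ℓ n (Fin.tail ε)) / ℓ := by
  simp [wordVal, Fin.sum_univ_succ, Fin.tail, pow_succ, add_div, sum_div, div_div]

lemma wordVal_append {m n : ℕ} (ε : Fin m → ℕ) (η : Fin n → ℕ) :
    wordVal ℓ (m + n) (Fin.append ε η) = wordVal ℓ m ε + wordVal ℓ n η / ℓ ^ m := by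
  simp only [wordVal, Fin.sum_univ_add, Fin.append_left, Fin.append_right, Fin.val_castAdd,
    Fin.val_natAdd, sum_div, div_div, ← pow_add]
  congr 1
  exact sum_congr rfl fun i _ => by ring_nf

lemma wordI_succ_s14 (hℓ : ℓ ≠ 0) {n : ℕ} (ε : Fin (n + 1) → ℕ) :
    wordI ℓ (n + 1) ε = (fun x : ℝ => ℓ * x - ε 0) ⁻¹' wordI ℓ n (Fin.tail ε) := by
  have hℓ' : (0 : ℝ) < ℓ := by positivity
  ext x
  have hw : ∀ w : ℝ, w / ℓ + 1 / ℓ ^ (n + 1) = (w + 1 / ℓ ^ n) / ℓ := fun w => by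
    field_simp
    ring
  rw [Set.mem_preimage, wordI_eq_Ico, wordI_eq_Ico, wordVal_succ, Set.mem_Ico, Set.mem_Ico, hw,
    div_le_iff₀ hℓ', lt_div_iff₀ hℓ']
  constructor <;> rintro ⟨h₁, h₂⟩ <;> constructor <;> linarith

lemma wordI_subset_Ico (hℓ : ℓ ≠ 0) :
    ∀ (n : ℕ) (ε : Fin n → ℕ), (∀ i, ε i < ℓ) → wordI ℓ n ε ⊆ Set.Ico 0 1
  | 0, ε, _ => (wordI_eq_Ico 0 ε).trans_subset (by simp [wordVal])
  | n + 1, ε, hε => by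
    have hε₀ : (ε 0 : ℝ) + 1 ≤ ℓ := by exact_mod_cast hε 0
    rw [wordI_succ_s14 hℓ]
    refine fun x hx => ?_
    obtain ⟨h₀, h₁⟩ := wordI_subset_Ico hℓ n (Fin.tail ε) (fun i => hε i.succ) hx
    constructor <;> nlinarith [(ε 0).cast_nonneg (α := ℝ)]

lemma exists_wordVal_eq (hℓ : ℓ ≠ 0) :
    ∀ (n k : ℕ), k < ℓ ^ n → ∃ ε : Fin n → ℕ, (∀ i, ε i < ℓ) ∧ wordVal ℓ n ε = k / ℓ ^ n
  | 0, k, hk => ⟨Fin.elim0, fun i => i.elim0, by simp_all [wordVal]⟩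
  | n + 1, k, hk => by
    obtain ⟨ε, hε, hval⟩ := exists_wordVal_eq hℓ n (k / ℓ)
      (Nat.div_lt_of_lt_mul (by rwa [pow_succ, mul_comm] at hk))
    refine ⟨Fin.append ε ![k % ℓ], fun i => ?_, ?_⟩
    · refine Fin.addCases (fun i => ?_) (fun i => ?_) i
      · simpa using hε i
      · simpa using Nat.mod_lt k (Nat.pos_of_ne_zero hℓ)
    · have hk : (k : ℝ) = ℓ * (k / ℓ : ℕ) + (k % ℓ : ℕ) := by
        exact_mod_cast (Nat.div_add_mod k ℓ).symm
      rw [wordVal_append, hval, hk]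
      simp [wordVal]
      field_simp
      ring

lemma adicI_eq_wordI {n k : ℕ} {ε : Fin n → ℕ} (h : wordVal ℓ n ε = k / ℓ ^ n) :
    adicI ℓ n k = wordI ℓ n ε := by
  rw [wordI_eq_Ico, h, adicI, add_div]

end Words

section MatrixRepresentation

variable {ℓ : ℕ} {p : ℕ → ℝ} {μ : Measure ℝ}

lemma measureReal_eq_one_of_Ioo_subset [IsProbabilityMeasure μ] (hsupp : μ (Set.Ioo 0 1)ᶜ = 0)
    {s : Set ℝ} (hs : Set.Ioo 0 1 ⊆ s) : μ.real s = 1 := by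
  have h : μ.real (Set.Ioo 0 1) = 1 := by
    rw [measureReal_def, (prob_compl_eq_zero_iff measurableSet_Ioo).1 hsupp, ENNReal.toReal_one]
  exact le_antisymm measureReal_le_one (h ▸ measureReal_mono hs)

lemma massVec_Ico [IsProbabilityMeasure μ] (hsupp : μ (Set.Ioo 0 1)ᶜ = 0) :
    massVec μ (Set.Ico 0 1) = ![1, 1] := by
  ext i
  fin_cases i
  · exact measureReal_eq_one_of_Ioo_subset hsupp Set.Ioo_subset_Ico_self
  · refine measureReal_eq_one_of_Ioo_subset hsupp fun x ⟨h₀, h₁⟩ => ?_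
    simp only [Set.mem_preimage, refl1, Set.mem_Ico]
    constructor <;> linarith

lemma massVec_wordI [IsProbabilityMeasure μ] (hp : ∀ i, 0 ≤ p i)
    (hself : μ = ∑ i ∈ range (2 * ℓ), ENNReal.ofReal (p i) • μ.map (simMapT ℓ i))
    (hsupp : μ (Set.Ioo 0 1)ᶜ = 0) :
    ∀ (n : ℕ) (ε : Fin n → ℕ), (∀ i, ε i < ℓ) →
      massVec μ (wordI ℓ n ε) = (List.ofFn fun i => MmatT ℓ p (ε i)).prod *ᵥ ![1, 1]
  | 0, ε, _ => by simp [wordI_eq_Ico, wordVal, massVec_Ico hsupp]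
  | n + 1, ε, hε => by
    have hℓ : ℓ ≠ 0 := by have := hε 0; omega
    have hsub := (wordI_subset_Ico hℓ n (Fin.tail ε) fun i => hε i.succ).trans
      Set.Ico_subset_Icc_self
    rw [wordI_succ_s14 hℓ, massVec_preimage_digit hp hself hsupp measurableSet_wordI hsub (hε 0),
      massVec_wordI hp hself hsupp n (Fin.tail ε) fun i => hε i.succ, List.ofFn_succ,
      List.prod_cons, Matrix.mulVec_mulVec]
    rfl

lemma mss_nuT [IsFiniteMeasure μ] {s : Set ℝ} (hs : MeasurableSet s) :
    mss (nuT μ) s = (massVec μ s 0 + massVec μ s 1) / 2 := by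
  rw [mss, nuT, Measure.smul_apply, Measure.add_apply, Measure.map_apply measurable_refl1 hs,
    smul_eq_mul, ENNReal.toReal_mul, ENNReal.toReal_add (measure_ne_top _ _) (measure_ne_top _ _)]
  simp [massVec, Measure.real]
  ring

lemma normH2_eq (M : Matrix (Fin 2) (Fin 2) ℝ) :
    normH2 M = ((M *ᵥ ![1, 1]) 0 + (M *ᵥ ![1, 1]) 1) / 2 := by
  simp [normH2, Matrix.mulVec, dotProduct]
  ring

theorem mss_nuT_wordI [IsProbabilityMeasure μ] (hp : ∀ i, 0 ≤ p i)
    (hself : μ = ∑ i ∈ range (2 * ℓ), ENNReal.ofReal (p i) • μ.map (simMapT ℓ i))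
    (hsupp : μ (Set.Ioo 0 1)ᶜ = 0) {n : ℕ} {ε : Fin n → ℕ} (hε : ∀ i, ε i < ℓ) :
    mss (nuT μ) (wordI ℓ n ε) = normH2 (List.ofFn fun i => MmatT ℓ p (ε i)).prod := by
  rw [mss_nuT measurableSet_wordI, massVec_wordI hp hself hsupp n ε hε, normH2_eq]

end MatrixRepresentation

section Submultiplicativity

variable {ℓ : ℕ} {p : ℕ → ℝ} {μ : Measure ℝ}

lemma MmatT_nonneg (hp : ∀ i, 0 ≤ p i) (ε : ℕ) (i j : Fin 2) : 0 ≤ MmatT ℓ p ε i j := by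
  fin_cases i <;> fin_cases j <;> simpa [MmatT] using hp _

lemma prod_MmatT_nonneg (hp : ∀ i, 0 ≤ p i) {n : ℕ} (ε : Fin n → ℕ) (i j : Fin 2) :
    0 ≤ (List.ofFn fun i => MmatT ℓ p (ε i)).prod i j := by
  refine List.prod_induction (fun M : Matrix (Fin 2) (Fin 2) ℝ => ∀ i j, 0 ≤ M i j)
    (fun A B hA hB i j => ?_) (fun i j => ?_) ?_ i j
  · rw [Matrix.mul_apply]
    exact sum_nonneg fun k _ => mul_nonneg (hA i k) (hB k j)
  · rw [Matrix.one_apply]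
    split_ifs <;> norm_num
  · simp only [List.mem_ofFn]
    rintro _ ⟨k, rfl⟩
    exact MmatT_nonneg hp _

lemma normH2_mul_le {A B : Matrix (Fin 2) (Fin 2) ℝ} (hA : ∀ i j, 0 ≤ A i j)
    (hB : ∀ i j, 0 ≤ B i j) : normH2 (A * B) ≤ 2 * normH2 A * normH2 B := by
  simp only [normH2, Matrix.mul_apply, Fin.sum_univ_two]
  -- `2‖A‖‖B‖ - ‖AB‖ = (c₀ r₁ + c₁ r₀) / 2`, `c` the column sums of `A`, `r` the row sums of `B`
  nlinarith [mul_nonneg (add_nonneg (hA 0 0) (hA 1 0)) (add_nonneg (hB 1 0) (hB 1 1)),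
    mul_nonneg (add_nonneg (hA 0 1) (hA 1 1)) (add_nonneg (hB 0 0) (hB 0 1))]

theorem mss_nuT_adicI_le [IsProbabilityMeasure μ] (hp : ∀ i, 0 ≤ p i)
    (hself : μ = ∑ i ∈ range (2 * ℓ), ENNReal.ofReal (p i) • μ.map (simMapT ℓ i))
    (hsupp : μ (Set.Ioo 0 1)ᶜ = 0) (hℓ : ℓ ≠ 0) {n m k j : ℕ} (hk : k < ℓ ^ n)
    (hj : j < ℓ ^ m) :
    mss (nuT μ) (adicI ℓ (n + m) (k * ℓ ^ m + j)) ≤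
      2 * mss (nuT μ) (adicI ℓ n k) * mss (nuT μ) (adicI ℓ m j) := by
  obtain ⟨ε, hε, hεk⟩ := exists_wordVal_eq hℓ n k hk
  obtain ⟨η, hη, hηj⟩ := exists_wordVal_eq hℓ m j hj
  have hεη : wordVal ℓ (n + m) (Fin.append ε η) = ((k * ℓ ^ m + j : ℕ) : ℝ) / ℓ ^ (n + m) := by
    rw [wordVal_append, hεk, hηj]
    push_cast
    field_simp
    ring
  have happ : ∀ i, Fin.append ε η i < ℓ := Fin.addCases (by simpa using hε) (by simpa using hη)
  have hprod : (List.ofFn fun i => MmatT ℓ p (Fin.append ε η i)).prod =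
      (List.ofFn fun i => MmatT ℓ p (ε i)).prod * (List.ofFn fun i => MmatT ℓ p (η i)).prod := by
    simp [List.ofFn_add, List.prod_append]
  rw [adicI_eq_wordI hεη, adicI_eq_wordI hεk, adicI_eq_wordI hηj, mss_nuT_wordI hp hself hsupp happ,
    mss_nuT_wordI hp hself hsupp hε, mss_nuT_wordI hp hself hsupp hη, hprod]
  exact normH2_mul_le (prod_MmatT_nonneg hp ε) (prod_MmatT_nonneg hp η)

lemma le_mulVec_apply {m n : Type*} [Fintype n] {A : Matrix m n ℝ} {v : n → ℝ} {a b : ℝ}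
    (hA : ∀ i j, 0 ≤ A i j) (hb : 0 ≤ b) (hv : ∀ j, b ≤ v j) {i : m} (hrow : a ≤ ∑ j, A i j) :
    a * b ≤ (A *ᵥ v) i :=
  calc a * b ≤ (∑ j, A i j) * b := mul_le_mul_of_nonneg_right hrow hb
    _ = ∑ j, A i j * b := sum_mul _ _ _
    _ ≤ ∑ j, A i j * v j := sum_le_sum fun j _ => mul_le_mul_of_nonneg_left (hv j) (hA i j)

lemma pow_le_prod_MmatT_mulVec (hp : ∀ i, 0 ≤ p i) {δ : ℝ} (hδ : 0 ≤ δ)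
    (hrow : ∀ e < ℓ, δ ≤ p e + p (e + ℓ)) :
    ∀ (n : ℕ) (ε : Fin n → ℕ), (∀ i, ε i < ℓ) →
      ∀ i, δ ^ n ≤ ((List.ofFn fun i => MmatT ℓ p (ε i)).prod *ᵥ ![1, 1]) i
  | 0, ε, _, i => by fin_cases i <;> simp
  | n + 1, ε, hε, i => by
    rw [List.ofFn_succ, List.prod_cons, ← Matrix.mulVec_mulVec, pow_succ']
    refine le_mulVec_apply (MmatT_nonneg hp _) (pow_nonneg hδ n)
      (pow_le_prod_MmatT_mulVec hp hδ hrow n (Fin.tail ε) fun i => hε i.succ) ?_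
    have hε₀ := hε 0
    fin_cases i
    · simpa [MmatT, Fin.sum_univ_two] using hrow _ hε₀
    · simpa [MmatT, Fin.sum_univ_two, show ℓ - 1 - ε 0 + ℓ = 2 * ℓ - 1 - ε 0 by omega, add_comm]
        using hrow (ℓ - 1 - ε 0) (by omega)

lemma pow_le_mss_nuT_adicI [IsProbabilityMeasure μ] (hp : ∀ i, 0 ≤ p i)
    (hself : μ = ∑ i ∈ range (2 * ℓ), ENNReal.ofReal (p i) • μ.map (simMapT ℓ i))
    (hsupp : μ (Set.Ioo 0 1)ᶜ = 0) (hℓ : ℓ ≠ 0) {δ : ℝ} (hδ : 0 ≤ δ)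
    (hrow : ∀ e < ℓ, δ ≤ p e + p (e + ℓ)) {n k : ℕ} (hk : k < ℓ ^ n) :
    δ ^ n ≤ mss (nuT μ) (adicI ℓ n k) := by
  obtain ⟨ε, hε, hεk⟩ := exists_wordVal_eq hℓ n k hk
  rw [adicI_eq_wordI hεk, mss_nuT_wordI hp hself hsupp hε, normH2_eq]
  have h := pow_le_prod_MmatT_mulVec hp hδ hrow n ε hε
  linarith [h 0, h 1]

end Submultiplicativity

section PartitionFunction

lemma sum_range_mul {M : Type*} [AddCommMonoid M] (a b : ℕ) (f : ℕ → M) :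
    ∑ K ∈ range (a * b), f K = ∑ k ∈ range a, ∑ j ∈ range b, f (k * b + j) := by
  induction a with
  | zero => simp
  | succ a ih => rw [add_mul, one_mul, sum_range_add, ih, sum_range_succ]

lemma mul_pow_add_lt_pow_add {ℓ n n' k j : ℕ} (hk : k < ℓ ^ n) (hj : j < ℓ ^ n') :
    k * ℓ ^ n' + j < ℓ ^ (n + n') := by
  rw [pow_add]
  nlinarith

lemma exists_tendsto_log_div_of_le_mul {v : ℕ → ℝ} {c r : ℝ} (hc : 1 ≤ c) (hr : 0 < r)
    (hv : ∀ n, r ^ n ≤ v n) (hmul : ∀ m n, v (m + n) ≤ c * v m * v n) :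
    ∃ L, Tendsto (fun n : ℕ => Real.log (v n) / n) atTop (𝓝 L) := by
  have hc₀ : 0 < c := one_pos.trans_le hc
  have hvpos (n : ℕ) : 0 < v n := (pow_pos hr n).trans_le (hv n)
  have hcv (n : ℕ) : 0 < c * v n := mul_pos hc₀ (hvpos n)
  have hsub : Subadditive fun n => Real.log (c * v n) := fun m n => by
    rw [← Real.log_mul (hcv m).ne' (hcv n).ne']
    refine Real.log_le_log (hcv _) ?_
    calc c * v (m + n) ≤ c * (c * v m * v n) := mul_le_mul_of_nonneg_left (hmul m n) hc₀.le
      _ = c * v m * (c * v n) := by ring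
  have hbdd : BddBelow (Set.range fun n : ℕ => Real.log (c * v n) / n) := by
    refine ⟨min 0 (Real.log r), ?_⟩
    rintro _ ⟨n, rfl⟩
    rcases Nat.eq_zero_or_pos n with rfl | hn
    · simp
    · refine (min_le_right _ _).trans ((le_div_iff₀ (by exact_mod_cast hn)).2 ?_)
      have hlog : Real.log (r ^ n) ≤ Real.log (c * v n) :=
        Real.log_le_log (pow_pos hr n) ((hv n).trans (le_mul_of_one_le_left (hvpos n).le hc))
      rw [Real.log_pow] at hlog
      linarith
  have h := (hsub.tendsto_lim hbdd).sub (tendsto_const_div_atTop_nhds_zero_nat (Real.log c))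
  rw [sub_zero] at h
  refine ⟨hsub.lim, h.congr fun n => ?_⟩
  rw [Real.log_mul hc₀.ne' (hvpos n).ne', add_div, add_sub_cancel_left]

lemma rpow_mul_sum_mul_sum {s t : Finset ℕ} {a b : ℕ → ℝ} {c : ℝ} (hc : 0 ≤ c)
    (ha : ∀ k ∈ s, 0 ≤ a k) (hb : ∀ j ∈ t, 0 ≤ b j) (q : ℝ) :
    c ^ q * (∑ k ∈ s, a k ^ q) * (∑ j ∈ t, b j ^ q) = ∑ k ∈ s, ∑ j ∈ t, (c * a k * b j) ^ q := by
  rw [mul_assoc, sum_mul_sum, mul_sum]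
  refine sum_congr rfl fun k hk => ?_
  rw [mul_sum]
  refine sum_congr rfl fun j hj => ?_
  rw [mul_assoc, Real.mul_rpow hc (mul_nonneg (ha k hk) (hb j hj)),
    Real.mul_rpow (ha k hk) (hb j hj)]

lemma rpow_pow_le_sum_rpow {ℓ n : ℕ} (hℓ : ℓ ≠ 0) {a : ℕ → ℝ} {δ : ℝ} (hδ : 0 < δ)
    (hlow : ∀ k < ℓ ^ n, δ ^ n ≤ a k) {q : ℝ} (hq : 0 ≤ q) :
    (δ ^ q) ^ n ≤ ∑ k ∈ range (ℓ ^ n), a k ^ q := by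
  have h₀ : 0 < ℓ ^ n := pow_pos (Nat.pos_of_ne_zero hℓ) n
  calc (δ ^ q) ^ n = (δ ^ n) ^ q := Real.rpow_pow_comm hδ.le q n
    _ ≤ a 0 ^ q := Real.rpow_le_rpow (by positivity) (hlow 0 h₀) hq
    _ ≤ ∑ k ∈ range (ℓ ^ n), a k ^ q := single_le_sum (fun k hk =>
        Real.rpow_nonneg ((pow_pos hδ n).le.trans (hlow k (mem_range.1 hk))) q) (mem_range.2 h₀)

lemma sum_rpow_le_mul_rpow_pow {ℓ n : ℕ} {a : ℕ → ℝ} {δ : ℝ} (hδ : 0 < δ)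
    (hlow : ∀ k < ℓ ^ n, δ ^ n ≤ a k) {q : ℝ} (hq : q ≤ 0) :
    ∑ k ∈ range (ℓ ^ n), a k ^ q ≤ (ℓ * δ ^ q) ^ n :=
  calc ∑ k ∈ range (ℓ ^ n), a k ^ q ≤ ∑ k ∈ range (ℓ ^ n), (δ ^ n) ^ q := sum_le_sum fun k hk =>
        Real.rpow_le_rpow_of_nonpos (pow_pos hδ n) (hlow k (mem_range.1 hk)) hq
    _ = (ℓ * δ ^ q) ^ n := by
        rw [sum_const, card_range, nsmul_eq_mul, mul_pow, Real.rpow_pow_comm hδ.le]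
        push_cast
        ring

theorem exists_tendsto_sum_rpow_rpow {ℓ : ℕ} (hℓ : ℓ ≠ 0) {m : ℕ → ℕ → ℝ} {δ : ℝ} (hδ : 0 < δ)
    (hlow : ∀ n k, k < ℓ ^ n → δ ^ n ≤ m n k)
    (hmul : ∀ n n' k j, k < ℓ ^ n → j < ℓ ^ n' →
      m (n + n') (k * ℓ ^ n' + j) ≤ 2 * m n k * m n' j) (q : ℝ) :
    ∃ L, Tendsto (fun n : ℕ => (∑ k ∈ range (ℓ ^ n), m n k ^ q) ^ ((1 : ℝ) / n)) atTop (𝓝 L) := by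
  set V : ℕ → ℝ := fun n => ∑ k ∈ range (ℓ ^ n), m n k ^ q with hV
  have hm {n k : ℕ} (hk : k < ℓ ^ n) : 0 < m n k := (pow_pos hδ n).trans_le (hlow n k hk)
  have hVpos (n : ℕ) : 0 < V n := sum_pos (fun k hk => Real.rpow_pos_of_pos (hm (mem_range.1 hk)) q)
    ⟨0, mem_range.2 (pow_pos (Nat.pos_of_ne_zero hℓ) n)⟩
  have hsplit (n n' : ℕ) : V (n + n') =
      ∑ k ∈ range (ℓ ^ n), ∑ j ∈ range (ℓ ^ n'), m (n + n') (k * ℓ ^ n' + j) ^ q := by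
    simp only [hV]
    rw [pow_add, sum_range_mul]
  have hprod (n n' : ℕ) : 2 ^ q * V n * V n' =
      ∑ k ∈ range (ℓ ^ n), ∑ j ∈ range (ℓ ^ n'), (2 * m n k * m n' j) ^ q :=
    rpow_mul_sum_mul_sum zero_le_two (fun k hk => (hm (mem_range.1 hk)).le)
      (fun j hj => (hm (mem_range.1 hj)).le) q
  have hterm {n n' k j : ℕ} (hk : k ∈ range (ℓ ^ n)) (hj : j ∈ range (ℓ ^ n')) :=
    hmul n n' k j (mem_range.1 hk) (mem_range.1 hj)
  have hpos {n n' k j : ℕ} (hk : k ∈ range (ℓ ^ n)) (hj : j ∈ range (ℓ ^ n')) :=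
    hm (mul_pow_add_lt_pow_add (mem_range.1 hk) (mem_range.1 hj))
  obtain ⟨L, hL⟩ : ∃ L, Tendsto (fun n : ℕ => Real.log (V n) / n) atTop (𝓝 L) := by
    rcases le_or_gt 0 q with hq | hq
    · refine exists_tendsto_log_div_of_le_mul (Real.one_le_rpow one_le_two hq)
        (Real.rpow_pos_of_pos hδ q) (fun n => rpow_pow_le_sum_rpow hℓ hδ (hlow n) hq)
        fun n n' => ?_
      rw [hsplit, hprod]
      exact sum_le_sum fun k hk => sum_le_sum fun j hj =>
        Real.rpow_le_rpow (hpos hk hj).le (hterm hk hj) hq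
    -- for `q < 0` the comparison is reversed, so Fekete's lemma is applied to `1 / V`
    · have hVmul (n n' : ℕ) : 2 ^ q * V n * V n' ≤ V (n + n') := by
        rw [hsplit, hprod]
        exact sum_le_sum fun k hk => sum_le_sum fun j hj =>
          Real.rpow_le_rpow_of_nonpos (hpos hk hj) (hterm hk hj) hq.le
      obtain ⟨L, hL⟩ := exists_tendsto_log_div_of_le_mul (v := fun n => (V n)⁻¹)
        (Real.one_le_rpow one_le_two (neg_nonneg.2 hq.le))
        (inv_pos.2 (mul_pos (Nat.cast_pos.2 (Nat.pos_of_ne_zero hℓ)) (Real.rpow_pos_of_pos hδ q)))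
        (fun n => by
          rw [inv_pow]
          exact inv_anti₀ (hVpos n) (sum_rpow_le_mul_rpow_pow hδ (hlow n) hq.le))
        fun n n' => by
          rw [Real.rpow_neg zero_le_two, mul_assoc, ← mul_inv, ← mul_inv, ← mul_assoc]
          exact inv_anti₀ (mul_pos (mul_pos (Real.rpow_pos_of_pos two_pos q) (hVpos n)) (hVpos n'))
            (hVmul n n')
      exact ⟨-L, by simpa [Real.log_inv, neg_div] using hL.neg⟩
  refine ⟨Real.exp L, ((Real.continuous_exp.tendsto L).comp hL).congr fun n => ?_⟩
  rw [Function.comp_apply, Real.rpow_def_of_pos (hVpos n), mul_one_div]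

end PartitionFunction

lemma uSeq_eq_sum {ℓ n : ℕ} {ν : Measure ℝ} {q : ℝ} (h : ∀ k < ℓ ^ n, mss ν (adicI ℓ n k) ≠ 0) :
    uSeq ℓ ν q n = ∑ k ∈ range (ℓ ^ n), mss ν (adicI ℓ n k) ^ q := by
  rw [uSeq, filter_true_of_mem fun k hk => h k (mem_range.1 hk)]

/-- `ν(I) = ‖M_I‖`, `ν(IJ) ≤ 2 ν(I) ν(J)`, and consequently
`v_n^{1/n}` converges, where `v_n = ∑_{I ∈ F_n} ν(I)^q`. -/
theorem stmt14 (ℓ : ℕ) (hℓ : 2 ≤ ℓ) (p : ℕ → ℝ) (hp : ∀ i, 0 ≤ p i)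
    (hsum : ∑ i ∈ Finset.range (2 * ℓ), p i = 1)
    (hpos : ∀ i < ℓ, 0 < p i + p (i + ℓ))
    (μ : Measure ℝ) [IsProbabilityMeasure μ]
    (hself : μ = ∑ i ∈ Finset.range (2 * ℓ), ENNReal.ofReal (p i) • μ.map (simMapT ℓ i)) :
    (∀ (n : ℕ) (ε : Fin n → ℕ), (∀ i, ε i < ℓ) →
        mss (nuT μ) (wordI ℓ n ε) = normH2 (List.ofFn (fun i => MmatT ℓ p (ε i))).prod) ∧
      (∀ (n q' k j : ℕ), k < ℓ ^ n → j < ℓ ^ q' →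
        mss (nuT μ) (adicI ℓ (n + q') (k * ℓ ^ q' + j)) ≤
          2 * mss (nuT μ) (adicI ℓ n k) * mss (nuT μ) (adicI ℓ q' j)) ∧
      ∀ q : ℝ, ∃ L : ℝ,
        Tendsto (fun n : ℕ => uSeq ℓ (nuT μ) q n ^ ((1 : ℝ) / n)) atTop (𝓝 L) := by
  have hℓ₀ : ℓ ≠ 0 := by omega
  have hsupp := measure_compl_Ioo_eq_zero hℓ hp hsum hpos hself
  have hmul (n n' k j : ℕ) (hk : k < ℓ ^ n) (hj : j < ℓ ^ n') :=
    mss_nuT_adicI_le hp hself hsupp hℓ₀ hk hj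
  obtain ⟨e, he, hmin⟩ :=
    (range ℓ).exists_min_image (fun e => p e + p (e + ℓ)) (nonempty_range_iff.2 hℓ₀)
  have hδ : 0 < p e + p (e + ℓ) := hpos e (mem_range.1 he)
  have hlow (n k : ℕ) (hk : k < ℓ ^ n) := pow_le_mss_nuT_adicI hp hself hsupp hℓ₀ hδ.le
    (fun e' he' => hmin e' (mem_range.2 he')) hk
  refine ⟨fun n ε hε => mss_nuT_wordI hp hself hsupp hε, hmul, fun q => ?_⟩
  obtain ⟨L, hL⟩ := exists_tendsto_sum_rpow_rpow hℓ₀ hδ hlow hmul q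
  refine ⟨L, hL.congr fun n => ?_⟩
  rw [uSeq_eq_sum fun k hk => ((pow_pos hδ n).trans_le (hlow n k hk)).ne']
end
end
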